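/- arXiv:math/0510622 — 3 statements merged into one kernel-verified Lean document; each statement's English description precedes it below -/
import Mathlib

section
/- Let n ≥ 2, let T be a maximal element of Nil_k(Q_n), let A ∈ Q_n, and let α be a nonzero real number. Then A ∈ T if and only if α·A + (1-α)·O_n ∈ T. -/
namespace NilSg

variable {M : Type*}

/-- `T ⊆ M` is closed under multiplication. -/
def IsSubsg [Mul M] (T : Set M) : Prop :=
  ∀ ⦃a⦄, a ∈ T → ∀ ⦃b⦄, b ∈ T → a * b ∈ T

/-- Every product of exactly `k` elements of `T` equals `z`
(such products are the products of nonempty lists `a :: l` of elements of `T`). -/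
def ProdEq [Mul M] (z : M) (T : Set M) (k : ℕ) : Prop :=
  ∀ (a : M) (l : List M), a ∈ T → (∀ x ∈ l, x ∈ T) → l.length + 1 = k →
    l.foldl (· * ·) a = z

/-- `T` is a nilpotent subsemigroup with respect to the zero element `z`. -/
def IsNilSubsg [Mul M] (z : M) (T : Set M) : Prop :=
  IsSubsg T ∧ ∃ k, 0 < k ∧ ProdEq z T k

/-- The nilpotency class of `T`: the minimal `k ≥ 1` such that every product of `k`
elements of `T` equals `z`. -/
noncomputable def nilClass [Mul M] (z : M) (T : Set M) : ℕ :=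
  sInf {k | 0 < k ∧ ProdEq z T k}

/-- `T` is a nilpotent subsemigroup of `S` (with zero `z`). -/
def NilIn [Mul M] (z : M) (S : Set M) (T : Set M) : Prop :=
  T ⊆ S ∧ IsNilSubsg z T

/-- `T` is a nilpotent subsemigroup of `S` (with zero `z`) of nilpotency class at most `k`. -/
def NilLe [Mul M] (z : M) (S : Set M) (k : ℕ) (T : Set M) : Prop :=
  T ⊆ S ∧ IsNilSubsg z T ∧ nilClass z T ≤ k

/-- `Ω n`: the semigroup of `n × n` real matrices with nonnegative entries. -/
def Omega (n : ℕ) : Set (Matrix (Fin n) (Fin n) ℝ) :=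
  {A | ∀ i j, 0 ≤ A i j}

/-- `Q n`: the semigroup of `n × n` real matrices all of whose row sums and
column sums equal `1`. -/
def Qset (n : ℕ) : Set (Matrix (Fin n) (Fin n) ℝ) :=
  {A | (∀ i, ∑ j, A i j = 1) ∧ (∀ j, ∑ i, A i j = 1)}

/-- `D n`: the semigroup of `n × n` doubly stochastic real matrices. -/
def Dset (n : ℕ) : Set (Matrix (Fin n) (Fin n) ℝ) :=
  {A | (∀ i j, 0 ≤ A i j) ∧ (∀ i, ∑ j, A i j = 1) ∧ (∀ j, ∑ i, A i j = 1)}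

/-- The matrix all of whose entries equal `1/n`: the zero element of `Q n` and `D n`. -/
noncomputable def On (n : ℕ) : Matrix (Fin n) (Fin n) ℝ :=
  Matrix.of fun _ _ => (n : ℝ)⁻¹

/-- The hyperplane `V` of all vectors whose coordinates sum to `0`. -/
def Vsub (n : ℕ) : Submodule ℝ (Fin n → ℝ) where
  carrier := {x | ∑ i, x i = 0}
  add_mem' := by
    intro a b ha hb
    simp only [Set.mem_setOf_eq, Pi.add_apply] at *
    simp [Finset.sum_add_distrib, ha, hb]
  zero_mem' := by simp
  smul_mem' := by
    intro c x hx
    simp only [Set.mem_setOf_eq, Pi.smul_apply, smul_eq_mul] at *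
    simp [← Finset.mul_sum, hx]

/-! `α • A + (1 - α) • O_n` is the image of `A` under the homothety with centre `O_n` and
ratio `α`. Because `O_n` is a two-sided zero of `Q_n`, homotheties about it multiply like
scalars: `h_a x * h_b y = h_(ab) (x * y)`. So every product of homothetic images of elements
of `T` is a homothetic image of a product in `T`, and homotheties fix `O_n`; the union of all
homothetic images of `T` is therefore again in `Nil_k(Q_n)`, hence equal to `T` by
maximality. Applying this with ratio `α⁻¹` gives the converse. -/

open AffineMap

section Homothety

variable {R : Type*} [CommRing R] [Ring M] [Algebra R M]

theorem homothety_apply_eq_smul_add_smul (z : M) (a : R) (x : M) :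
    homothety z a x = a • x + (1 - a) • z := by
  rw [homothety_eq_lineMap, lineMap_apply_module, add_comm]

theorem homothety_mul_homothety {z x y : M} (hx : x * z = z) (hy : z * y = z)
    (hz : z * z = z) (a b : R) :
    homothety z a x * homothety z b y = homothety z (a * b) (x * y) := by
  simp only [homothety_apply_eq_smul_add_smul, add_mul, mul_add, smul_mul_assoc,
    mul_smul_comm, hx, hy, hz]
  module

variable (R) in
def homotheticClosure (z : M) (T : Set M) : Set M :=
  ⋃ a : R, homothety z a '' T

variable {z : M} {T : Set M}

theorem mem_homotheticClosure {y : M} :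
    y ∈ homotheticClosure R z T ↔ ∃ a : R, ∃ x ∈ T, homothety z a x = y := by
  simp [homotheticClosure]

theorem subset_homotheticClosure : T ⊆ homotheticClosure R z T := fun x hx =>
  mem_homotheticClosure.2 ⟨1, x, hx, by simp⟩

section ZeroAbsorbing

variable (hTz : ∀ x ∈ T, x * z = z) (hzT : ∀ x ∈ T, z * x = z) (hzz : z * z = z)
include hTz hzT hzz

theorem isSubsg_homotheticClosure (hT : IsSubsg T) : IsSubsg (homotheticClosure R z T) := by
  intro _ hx' _ hy'
  obtain ⟨a, x, hx, rfl⟩ := mem_homotheticClosure.1 hx'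
  obtain ⟨b, y, hy, rfl⟩ := mem_homotheticClosure.1 hy'
  exact mem_homotheticClosure.2
    ⟨a * b, x * y, hT hx hy, (homothety_mul_homothety (hTz x hx) (hzT y hy) hzz a b).symm⟩

theorem exists_foldl_homothety_eq (hT : IsSubsg T) (l : List M)
    (hl : ∀ y ∈ l, y ∈ homotheticClosure R z T) (a : R) {x : M} (hx : x ∈ T) :
    ∃ (b : R) (l' : List M), (∀ y ∈ l', y ∈ T) ∧ l'.length = l.length ∧
      l.foldl (· * ·) (homothety z a x) = homothety z b (l'.foldl (· * ·) x) := by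
  induction l generalizing a x with
  | nil => exact ⟨a, [], by simp, rfl, rfl⟩
  | cons _ l ih =>
    obtain ⟨c, y, hy, rfl⟩ := mem_homotheticClosure.1 (hl _ List.mem_cons_self)
    obtain ⟨b, l', hl', hlen, heq⟩ :=
      ih (fun w hw => hl w (List.mem_cons_of_mem _ hw)) (a * c) (hT hx hy)
    refine ⟨b, y :: l', List.forall_mem_cons.2 ⟨hy, hl'⟩, by simp [hlen], ?_⟩
    rw [List.foldl_cons, homothety_mul_homothety (hTz x hx) (hzT y hy) hzz, heq,
      List.foldl_cons]

theorem prodEq_homotheticClosure (hT : IsSubsg T) {k : ℕ} (h : ProdEq z T k) :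
    ProdEq z (homotheticClosure R z T) k := by
  intro _ l hx' hl hlen
  obtain ⟨a, x, hx, rfl⟩ := mem_homotheticClosure.1 hx'
  obtain ⟨b, l', hl', hlen', heq⟩ := exists_foldl_homothety_eq hTz hzT hzz hT l hl a hx
  rw [heq, h x l' hx hl' (hlen' ▸ hlen), homothety_apply_same]

theorem nilLe_homotheticClosure {S : Set M} {k : ℕ} (hT : NilLe z S k T)
    (hS : ∀ (a : R), ∀ x ∈ S, homothety z a x ∈ S) :
    NilLe z S k (homotheticClosure R z T) := by
  obtain ⟨hTS, ⟨hsub, m, hm, hprod⟩, hclass⟩ := hT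
  have hmem : 0 < nilClass z T ∧ ProdEq z T (nilClass z T) :=
    Nat.sInf_mem (s := {k | 0 < k ∧ ProdEq z T k}) ⟨m, hm, hprod⟩
  have hclosure : 0 < nilClass z T ∧ ProdEq z (homotheticClosure R z T) (nilClass z T) :=
    ⟨hmem.1, prodEq_homotheticClosure hTz hzT hzz hsub hmem.2⟩
  refine ⟨?_, ⟨isSubsg_homotheticClosure hTz hzT hzz hsub, _, hclosure⟩,
    (Nat.sInf_le hclosure).trans hclass⟩
  intro _ hy
  obtain ⟨a, x, hx, rfl⟩ := mem_homotheticClosure.1 hy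
  exact hS a x (hTS hx)

end ZeroAbsorbing

theorem mem_iff_homothety_mem_of_maximal_nilLe {S : Set M} {k : ℕ}
    (hT : Maximal (NilLe z S k) T)
    (hSz : ∀ x ∈ S, x * z = z) (hzS : ∀ x ∈ S, z * x = z) (hzz : z * z = z)
    (hS : ∀ (a : R), ∀ x ∈ S, homothety z a x ∈ S) {a : R} (ha : IsUnit a) (x : M) :
    x ∈ T ↔ homothety z a x ∈ T := by
  have hclosed : homotheticClosure R z T ⊆ T :=
    hT.2 (nilLe_homotheticClosure (fun x hx => hSz x (hT.1.1 hx))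
      (fun x hx => hzS x (hT.1.1 hx)) hzz hT.1 hS) subset_homotheticClosure
  have hmem (b : R) {y : M} (hy : y ∈ T) : homothety z b y ∈ T :=
    hclosed (mem_homotheticClosure.2 ⟨b, y, hy, rfl⟩)
  obtain ⟨u, rfl⟩ := ha
  refine ⟨hmem u, fun h => ?_⟩
  simpa [← homothety_mul_apply] using hmem (↑u⁻¹ : R) h

end Homothety

section Qset

variable {n : ℕ}

theorem mul_On {B : Matrix (Fin n) (Fin n) ℝ} (hB : ∀ i, ∑ j, B i j = 1) :
    B * On n = On n := by
  ext i j
  simp [Matrix.mul_apply, On, ← Finset.sum_mul, hB]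

theorem On_mul {B : Matrix (Fin n) (Fin n) ℝ} (hB : ∀ j, ∑ i, B i j = 1) :
    On n * B = On n := by
  ext i j
  simp [Matrix.mul_apply, On, ← Finset.mul_sum, hB]

theorem On_mem_Qset (n : ℕ) : On n ∈ Qset n := by
  constructor <;> intro i <;>
    simp [On, mul_inv_cancel₀ (Nat.cast_ne_zero.2 (Fin.pos i).ne' : (n : ℝ) ≠ 0)]

theorem homothety_On_mem_Qset (a : ℝ) {A : Matrix (Fin n) (Fin n) ℝ} (hA : A ∈ Qset n) :
    homothety (On n) a A ∈ Qset n := by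
  obtain ⟨hOrow, hOcol⟩ := On_mem_Qset n
  constructor <;> intro i <;>
    simp [homothety_apply_eq_smul_add_smul, Finset.sum_add_distrib, ← Finset.mul_sum,
      hA.1, hA.2, hOrow, hOcol]

end Qset

theorem stmt16_general (n k : ℕ) (T : Set (Matrix (Fin n) (Fin n) ℝ))
    (hT : Maximal (NilLe (On n) (Qset n) k) T)
    (A : Matrix (Fin n) (Fin n) ℝ) (α : ℝ) (hα : α ≠ 0) :
    A ∈ T ↔ α • A + (1 - α) • On n ∈ T := by
  rw [← homothety_apply_eq_smul_add_smul]
  exact mem_iff_homothety_mem_of_maximal_nilLe hT (fun _ hB => mul_On hB.1)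
    (fun _ hB => On_mul hB.2)
    (mul_On (On_mem_Qset n).1) (fun a _ hB => homothety_On_mem_Qset a hB) hα.isUnit A

/-- If `T` is a maximal element of `Nil_k(Q_n)`, `A ∈ Q_n` and
`α ≠ 0`, then `A ∈ T` iff `α·A + (1-α)·O_n ∈ T`. -/
theorem stmt16 (n k : ℕ) (hn : 2 ≤ n) (T : Set (Matrix (Fin n) (Fin n) ℝ))
    (hT : Maximal (NilLe (On n) (Qset n) k) T)
    (A : Matrix (Fin n) (Fin n) ℝ) (hA : A ∈ Qset n) (α : ℝ) (hα : α ≠ 0) :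
    A ∈ T ↔ α • A + (1 - α) • On n ∈ T :=
  stmt16_general n k T hT A α hα

end NilSg
end

section
/- Let n ≥ 2 and 1 ≤ k ≤ n-1. The map sending a flag 0 = V_0 ⊊ V_1 ⊊ ⋯ ⊊ V_k = V of length k in V to the set {A ∈ D_n : A·V_i ⊆ V_{i-1} for all i = 1,…,k} is a bijection from the set of flags of length k in V onto the set of maximal elements of Nil_k(D_n). In particular, the maximal nilpotent subsemigroups of D_n correspond bijectively to complete flags 0 = V_0 ⊊ V_1 ⊊ ⋯ ⊊ V_{n-1} = V in V. -/
open Module Set Matrix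
open scoped SetRel

section InsertNth

variable {α : Type*} {r : SetRel α α}

theorem RelSeries.head_insertNth (p : RelSeries r) (i : Fin p.length) (a : α)
    (h₁ : p i.castSucc ~[r] a) (h₂ : a ~[r] p i.succ) : (p.insertNth i a h₁ h₂).head = p.head := by
  show Fin.insertNth (α := fun _ => α) (Fin.castSucc i.succ) a p 0 = p 0
  rw [Fin.insertNth_apply_below (Fin.castSucc_pos' i.succ_pos)]
  rfl

theorem RelSeries.last_insertNth (p : RelSeries r) (i : Fin p.length) (a : α)
    (h₁ : p i.castSucc ~[r] a) (h₂ : a ~[r] p i.succ) : (p.insertNth i a h₁ h₂).last = p.last := by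
  show Fin.insertNth (α := fun _ => α) (Fin.castSucc i.succ) a p (Fin.last _) = p (Fin.last _)
  rw [Fin.insertNth_apply_above (Fin.castSucc_lt_last _)]
  simp [Fin.pred_last]

end InsertNth

section Flags

variable {K E : Type*} [Field K] [AddCommGroup E] [Module K E]

structure IsFlag {k : ℕ} (P : Submodule K E) (F : Fin (k + 1) → Submodule K E) : Prop where
  zero : F 0 = ⊥
  last : F (Fin.last k) = P
  strictMono : StrictMono F

namespace IsFlag

variable {k : ℕ} {P : Submodule K E} {F : Fin (k + 1) → Submodule K E}

theorem le (hF : IsFlag P F) (i : Fin (k + 1)) : F i ≤ P :=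
  hF.last ▸ hF.strictMono.monotone (Fin.le_last i)

theorem exists_mem_notMem (hF : IsFlag P F) (i : Fin k) : ∃ z ∈ F i.succ, z ∉ F i.castSucc :=
  SetLike.exists_of_lt (hF.strictMono Fin.castSucc_lt_succ)

end IsFlag

def lowering (S : Set (E → E)) : SetRel (Submodule K E) (Submodule K E) :=
  {p | p.1 < p.2 ∧ ∀ f ∈ S, MapsTo f p.2 p.1}

theorem RelSeries.exists_finrank_add_one_lt {r : SetRel (Submodule K E) (Submodule K E)}
    (p : RelSeries r) (h : finrank K p.head + p.length < finrank K p.last) :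
    ∃ i : Fin p.length, finrank K (p i.castSucc) + 1 < finrank K (p i.succ) := by
  by_contra! hp
  have hle : ∀ i : Fin (p.length + 1), finrank K (p i) ≤ finrank K p.head + i := by
    refine Fin.induction le_rfl fun i hi => ?_
    have := hp i
    simp only [Fin.val_succ, Fin.val_castSucc] at hi ⊢
    omega
  have := hle (Fin.last _)
  rw [Fin.val_last] at this
  exact this.not_gt h

variable [FiniteDimensional K E]

theorem LTSeries.finrank_head_add_length_le (p : LTSeries (Submodule K E)) :
    finrank K p.head + p.length ≤ finrank K p.last :=
  (p.map _ Submodule.finrank_strictMono).head_add_length_le_nat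

theorem exists_lt_lt_of_finrank_add_one_lt {U W : Submodule K E} (hUW : U ≤ W)
    (h : finrank K U + 1 < finrank K W) : ∃ X, U < X ∧ X < W := by
  obtain ⟨x, hxW, hxU⟩ := SetLike.exists_of_lt (lt_of_le_of_ne hUW (by rintro rfl; omega))
  refine ⟨U ⊔ K ∙ x, left_lt_sup.2 (by rwa [Submodule.span_singleton_le_iff_mem]),
    lt_of_le_of_ne (sup_le hUW ((Submodule.span_singleton_le_iff_mem _ _).2 hxW)) fun hX => ?_⟩
  have := Submodule.finrank_add_le_finrank_add_finrank U (K ∙ x)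
  rw [hX, finrank_span_singleton (by rintro rfl; exact hxU U.zero_mem)] at this
  omega

theorem exists_lowering_series_length_eq {S : Set (E → E)} (p : RelSeries (lowering (K := K) S))
    {k : ℕ} (hpk : p.length ≤ k) (hk : finrank K p.head + k ≤ finrank K p.last) :
    ∃ q : RelSeries (lowering S), q.head = p.head ∧ q.last = p.last ∧ q.length = k := by
  induction hd : k - p.length generalizing p with
  | zero => exact ⟨p, rfl, rfl, by omega⟩
  | succ d ih =>
    obtain ⟨i, hi⟩ := p.exists_finrank_add_one_lt (by omega)
    obtain ⟨hlt, hmaps⟩ := p.step i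
    obtain ⟨X, hX₁, hX₂⟩ := exists_lt_lt_of_finrank_add_one_lt hlt.le hi
    have h₁ : p i.castSucc ~[lowering S] X := ⟨hX₁, fun f hf => (hmaps f hf).mono_left hX₂.le⟩
    have h₂ : X ~[lowering S] p i.succ := ⟨hX₂, fun f hf => (hmaps f hf).mono_right hX₁.le⟩
    have hlen : (p.insertNth i X h₁ h₂).length = p.length + 1 := rfl
    rw [← p.head_insertNth i X h₁ h₂, ← p.last_insertNth i X h₁ h₂] at hk ⊢
    exact ih _ (by omega) hk (by omega)

end Flags

namespace NilSg

section Products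

variable {M : Type*} {z : M} {T : Set M}

theorem prodEq_iff [Monoid M] {k : ℕ} (hk : 0 < k) :
    ProdEq z T k ↔ ∀ l : List M, (∀ x ∈ l, x ∈ T) → l.length = k → l.prod = z := by
  have hfold (a : M) (l : List M) : l.foldl (· * ·) a = (a :: l).prod :=
    List.foldl_eq_apply_foldr
  refine ⟨fun h l hl hlen => ?_, fun h a l ha hl hlen => ?_⟩
  · obtain _ | ⟨a, l⟩ := l
    · exact absurd hlen hk.ne
    · rw [← hfold]
      exact h a l (hl a (List.mem_cons_self ..)) (fun x hx => hl x (List.mem_cons_of_mem a hx))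
        hlen
  · rw [hfold]
    exact h (a :: l) (List.forall_mem_cons.2 ⟨ha, hl⟩) hlen

theorem nilClass_spec [Mul M] (h : IsNilSubsg z T) : 0 < nilClass z T ∧ ProdEq z T (nilClass z T) :=
  Nat.sInf_mem (s := {k | 0 < k ∧ ProdEq z T k}) h.2

theorem nilClass_le_of_prodEq [Mul M] {k : ℕ} (hk : 0 < k) (h : ProdEq z T k) : nilClass z T ≤ k :=
  Nat.sInf_le (s := {k | 0 < k ∧ ProdEq z T k}) ⟨hk, h⟩

end Products

variable {n : ℕ}

section DoublyStochastic

variable {A : Matrix (Fin n) (Fin n) ℝ} {x : Fin n → ℝ}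

theorem mem_Dset_iff : A ∈ Dset n ↔ A ∈ doublyStochastic ℝ (Fin n) :=
  mem_doublyStochastic_iff_sum.symm

theorem mul_mem_Dset {B : Matrix (Fin n) (Fin n) ℝ} (hA : A ∈ Dset n) (hB : B ∈ Dset n) :
    A * B ∈ Dset n :=
  mem_Dset_iff.2 <| mul_mem (mem_Dset_iff.1 hA) (mem_Dset_iff.1 hB)

theorem list_prod_mem_Dset {l : List (Matrix (Fin n) (Fin n) ℝ)} (hl : ∀ A ∈ l, A ∈ Dset n) :
    l.prod ∈ Dset n :=
  mem_Dset_iff.2 <| Submonoid.list_prod_mem _ fun A hA => mem_Dset_iff.1 (hl A hA)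

theorem mem_Vsub_iff : x ∈ Vsub n ↔ 1 ⬝ᵥ x = 0 := by
  rw [one_dotProduct]; rfl

theorem finrank_Vsub : finrank ℝ (Vsub n) = n - 1 := by
  rcases eq_or_ne n 0 with rfl | hn
  · exact finrank_zero_of_subsingleton
  have hker : Vsub n = LinearMap.ker (dotProductBilin ℝ ℝ (1 : Fin n → ℝ)) := by
    ext x; simp [mem_Vsub_iff]
  have hne : dotProductBilin ℝ ℝ (1 : Fin n → ℝ) ≠ 0 := fun h => by
    simpa [hn] using LinearMap.congr_fun h 1
  have := Module.Dual.finrank_ker_add_one_of_ne_zero hne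
  rw [← hker, finrank_fin_fun] at this
  omega

theorem mulVec_mem_Vsub (hA : A ∈ Dset n) (hx : x ∈ Vsub n) : A *ᵥ x ∈ Vsub n := by
  rw [mem_Vsub_iff, dotProduct_mulVec, (mem_doublyStochastic.1 (mem_Dset_iff.1 hA)).2.2]
  exact mem_Vsub_iff.1 hx

theorem On_mulVec (x : Fin n → ℝ) : On n *ᵥ x = fun _ => (n : ℝ)⁻¹ * ∑ j, x j := by
  ext i; simp [On, mulVec, dotProduct, Finset.mul_sum]

theorem On_mulVec_of_mem_Vsub (hx : x ∈ Vsub n) : On n *ᵥ x = 0 := by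
  rw [On_mulVec, show ∑ j, x j = 0 from hx, mul_zero]; rfl

theorem sub_On_mulVec_mem_Vsub (x : Fin n → ℝ) : x - On n *ᵥ x ∈ Vsub n := by
  rcases eq_or_ne n 0 with rfl | hn
  · simp [Vsub]
  show ∑ i, (x - On n *ᵥ x) i = 0
  simp [On_mulVec, Finset.sum_sub_distrib, hn]

theorem mul_On_s18 (hA : A ∈ Dset n) : A * On n = On n := by
  ext i j
  simp [On, mul_apply, ← Finset.sum_mul, hA.2.1 i]

theorem eq_On_of_mulVec_eq_zero (hA : A ∈ Dset n) (h : ∀ x ∈ Vsub n, A *ᵥ x = 0) : A = On n := by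
  refine ext_of_mulVec_single fun j => ?_
  set x : Fin n → ℝ := Pi.single j 1
  calc A *ᵥ x = A *ᵥ (x - On n *ᵥ x) + (A * On n) *ᵥ x := by
        rw [mulVec_sub, mulVec_mulVec]; abel
    _ = On n *ᵥ x := by rw [h _ (sub_On_mulVec_mem_Vsub x), mul_On_s18 hA, zero_add]

theorem exists_pos_forall_mul_abs_le {ι : Type*} [Fintype ι] (g : ι → ℝ) {a : ℝ} (ha : 0 < a) :
    ∃ ε > 0, ∀ i, ε * |g i| ≤ a := by
  set s := ∑ i, |g i|
  have hs : 0 < 1 + s := by positivity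
  refine ⟨a / (1 + s), by positivity, fun i => ?_⟩
  calc a / (1 + s) * |g i| ≤ a / (1 + s) * (1 + s) := by
        gcongr
        linarith [Finset.single_le_sum (fun j _ => abs_nonneg (g j)) (Finset.mem_univ i)]
    _ = a := div_mul_cancel₀ a hs.ne'

theorem exists_mem_Dset_mulVec_eq_smul {y : Fin n → ℝ} (hy : y ∈ Vsub n)
    (f : (Fin n → ℝ) →ₗ[ℝ] ℝ) :
    ∃ A ∈ Dset n, ∃ ε : ℝ, ε ≠ 0 ∧ ∀ x ∈ Vsub n, A *ᵥ x = (ε * f x) • y := by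
  rcases eq_or_ne n 0 with rfl | hn
  · exact ⟨1, by simp [Dset], 1, one_ne_zero, fun _ _ => Subsingleton.elim _ _⟩
  -- `c` is the coefficient vector of `f`, centred: this keeps `c ⬝ᵥ x = f x` on `Vsub n` and makes
  -- the rows of `vecMulVec y c` sum to `0` (its columns do because `y ∈ Vsub n`).
  set c₀ : Fin n → ℝ := fun i => f fun j => if i = j then 1 else 0
  set c := c₀ - On n *ᵥ c₀
  have hc : c ∈ Vsub n := sub_On_mulVec_mem_Vsub c₀
  have hfc : ∀ x ∈ Vsub n, f x = c ⬝ᵥ x := by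
    intro x hx
    have hx' : ∑ j, x j = 0 := hx
    rw [sub_dotProduct, On_mulVec, LinearMap.pi_apply_eq_sum_univ f x]
    simp [c₀, dotProduct, ← Finset.sum_mul, hx', mul_comm]
  have hOn : On n *ᵥ 1 = 1 ∧ 1 ᵥ* On n = 1 := by
    constructor <;> ext <;> simp [On, mulVec, vecMul, dotProduct, hn]
  obtain ⟨ε, hε, hεle⟩ := exists_pos_forall_mul_abs_le (fun p : Fin n × Fin n => y p.1 * c p.2)
    (inv_pos.2 (Nat.cast_pos.2 (Nat.pos_of_ne_zero hn)))
  refine ⟨On n + ε • vecMulVec y c,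
    mem_Dset_iff.2 (mem_doublyStochastic.2 ⟨fun i j => ?_, ?_, ?_⟩), ε, hε.ne', fun x hx => ?_⟩
  · have := hεle (i, j)
    have := neg_abs_le (y i * c j)
    simp only [Matrix.add_apply, Matrix.smul_apply, vecMulVec_apply, On, of_apply, smul_eq_mul]
    nlinarith
  · rw [add_mulVec, smul_mulVec, vecMulVec_mulVec, dotProduct_one, show ∑ i, c i = 0 from hc,
      hOn.1]
    simp
  · rw [vecMul_add, vecMul_smul, vecMul_vecMulVec, one_dotProduct, show ∑ i, y i = 0 from hy,
      hOn.2]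
    simp
  · rw [add_mulVec, smul_mulVec, vecMulVec_mulVec, On_mulVec_of_mem_Vsub hx, hfc x hx, zero_add,
      op_smul_eq_smul, smul_smul]

end DoublyStochastic

section KerChain

variable {T T' : Set (Matrix (Fin n) (Fin n) ℝ)} {i : ℕ} {v : Fin n → ℝ}

def kerChain (T : Set (Matrix (Fin n) (Fin n) ℝ)) (i : ℕ) : Submodule ℝ (Fin n → ℝ) :=
  Vsub n ⊓ ⨅ (l : List (Matrix (Fin n) (Fin n) ℝ)) (_ : ∀ A ∈ l, A ∈ T) (_ : l.length = i),
    LinearMap.ker l.prod.mulVecLin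

theorem mem_kerChain : v ∈ kerChain T i ↔
    v ∈ Vsub n ∧ ∀ l : List (Matrix (Fin n) (Fin n) ℝ), (∀ A ∈ l, A ∈ T) → l.length = i →
      l.prod *ᵥ v = 0 := by
  simp [kerChain]

theorem kerChain_le_Vsub : kerChain T i ≤ Vsub n := inf_le_left

theorem kerChain_zero : kerChain T 0 = ⊥ :=
  eq_bot_iff.2 fun v hv => by simpa using (mem_kerChain.1 hv).2 [] (by simp) rfl

theorem kerChain_anti (h : T ⊆ T') : kerChain T' i ≤ kerChain T i := fun _ hv =>
  mem_kerChain.2 ⟨(mem_kerChain.1 hv).1,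
    fun l hl => (mem_kerChain.1 hv).2 l fun A hA => h (hl A hA)⟩

theorem kerChain_monotone : Monotone (kerChain T) := by
  refine monotone_nat_of_le_succ fun i v hv => mem_kerChain.2 ⟨kerChain_le_Vsub hv, ?_⟩
  rintro (_ | ⟨A, l⟩) hl hlen
  · simp at hlen
  · rw [List.prod_cons, ← mulVec_mulVec, (mem_kerChain.1 hv).2 l
      (fun B hB => hl B (List.mem_cons_of_mem A hB)) (by simpa using hlen), mulVec_zero]

theorem mem_kerChain_succ (hT : T ⊆ Dset n) :
    v ∈ kerChain T (i + 1) ↔ v ∈ Vsub n ∧ ∀ A ∈ T, A *ᵥ v ∈ kerChain T i := by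
  simp only [mem_kerChain]
  refine ⟨fun ⟨hv, h⟩ => ⟨hv, fun A hA => ⟨mulVec_mem_Vsub (hT hA) hv, fun l hl hlen => ?_⟩⟩,
    fun ⟨hv, h⟩ => ⟨hv, fun l hl hlen => ?_⟩⟩
  · rw [mulVec_mulVec, ← List.prod_concat, List.concat_eq_append]
    exact h _ (by simpa [or_imp, forall_and] using ⟨hl, hA⟩) (by simp [hlen])
  · obtain ⟨l, A, rfl⟩ := (List.eq_nil_or_concat' l).resolve_left (by rintro rfl; simp at hlen)
    simp only [List.mem_append, List.mem_singleton, or_imp, forall_and, forall_eq] at hl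
    rw [List.prod_append, List.prod_singleton, ← mulVec_mulVec]
    exact (h A hl.2).2 l hl.1 (by simpa using hlen)

theorem kerChain_eq_Vsub_iff_prodEq (hT : T ⊆ Dset n) (hi : 0 < i) :
    kerChain T i = Vsub n ↔ ProdEq (On n) T i := by
  rw [prodEq_iff hi]
  refine ⟨fun h l hl hlen => eq_On_of_mulVec_eq_zero (list_prod_mem_Dset fun A hA => hT (hl A hA))
    fun x hx => (mem_kerChain.1 (h.ge hx)).2 l hl hlen, fun h => kerChain_le_Vsub.antisymm
    fun x hx => mem_kerChain.2 ⟨hx, fun l hl hlen => by rw [h l hl hlen, On_mulVec_of_mem_Vsub hx]⟩⟩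

theorem kerChain_eq_Vsub_of_nilLe {k : ℕ} (h : NilLe (On n) (Dset n) k T) :
    kerChain T k = Vsub n := by
  obtain ⟨hT, hnil, hk⟩ := h
  obtain ⟨hpos, hcls⟩ := nilClass_spec hnil
  exact kerChain_le_Vsub.antisymm <|
    ((kerChain_eq_Vsub_iff_prodEq hT hpos).2 hcls).ge.trans (kerChain_monotone hk)

theorem kerChain_eq_of_eq_succ (hT : T ⊆ Dset n) (h : kerChain T i = kerChain T (i + 1)) {m : ℕ}
    (hm : i ≤ m) : kerChain T m = kerChain T i := by
  induction m, hm using Nat.le_induction with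
  | base => rfl
  | succ m _ ih =>
    rw [h]
    ext v
    rw [mem_kerChain_succ hT, mem_kerChain_succ hT, ih]

theorem exists_lowering_series_kerChain (hT : T ⊆ Dset n) (h : kerChain T i = Vsub n) :
    ∃ p : RelSeries (lowering (K := ℝ) ((· *ᵥ ·) '' T)), p.head = ⊥ ∧ p.last = Vsub n ∧
      p.length ≤ i ∧ kerChain T p.length = Vsub n := by
  classical
  have hex : ∃ i, kerChain T i = Vsub n := ⟨i, h⟩
  have hlt : ∀ j < Nat.find hex, kerChain T j < kerChain T (j + 1) := fun j hj =>
    (kerChain_monotone j.le_succ).lt_of_ne fun hj' =>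
      Nat.find_min hex hj ((kerChain_eq_of_eq_succ hT hj' hj.le).symm.trans (Nat.find_spec hex))
  refine ⟨⟨Nat.find hex, fun j => kerChain T j, fun j => ⟨hlt j j.2, ?_⟩⟩, kerChain_zero,
    Nat.find_spec hex, Nat.find_min' hex h, Nat.find_spec hex⟩
  rintro _ ⟨A, hA, rfl⟩ v hv
  exact ((mem_kerChain_succ hT).1 hv).2 A hA

theorem nilClass_le_sub_one (hn : 2 ≤ n) (hT : T ⊆ Dset n) (hnil : IsNilSubsg (On n) T) :
    nilClass (On n) T ≤ n - 1 := by
  obtain ⟨-, j, hj, hprod⟩ := hnil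
  obtain ⟨p, hhead, hlast, -, hp⟩ :=
    exists_lowering_series_kerChain hT ((kerChain_eq_Vsub_iff_prodEq hT hj).2 hprod)
  have hlen : finrank ℝ p.head + p.length ≤ finrank ℝ p.last :=
    LTSeries.finrank_head_add_length_le (p.map ⟨id, fun h => h.1⟩)
  rw [hhead, hlast, finrank_bot, finrank_Vsub] at hlen
  have hpos : 0 < p.length := Nat.pos_of_ne_zero fun h0 => by
    have := finrank_Vsub (n := n)
    rw [← hp, h0, kerChain_zero, finrank_bot] at this
    omega
  exact (nilClass_le_of_prodEq hpos ((kerChain_eq_Vsub_iff_prodEq hT hpos).1 hp)).trans (by omega)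

theorem nilIn_iff_nilLe (hn : 2 ≤ n) :
    NilIn (On n) (Dset n) T ↔ NilLe (On n) (Dset n) (n - 1) T :=
  ⟨fun ⟨hT, hnil⟩ => ⟨hT, hnil, nilClass_le_sub_one hn hT hnil⟩, fun ⟨hT, hnil, _⟩ => ⟨hT, hnil⟩⟩

end KerChain

section Flag

variable {k : ℕ} {F : Fin (k + 1) → Submodule ℝ (Fin n → ℝ)} {T : Set (Matrix (Fin n) (Fin n) ℝ)}

def flagSemigroup (F : Fin (k + 1) → Submodule ℝ (Fin n → ℝ)) :
    Set (Matrix (Fin n) (Fin n) ℝ) :=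
  {A | A ∈ Dset n ∧ ∀ i : Fin k, ∀ x ∈ F i.succ, A *ᵥ x ∈ F i.castSucc}

theorem flagSemigroup_subset_Dset : flagSemigroup F ⊆ Dset n := fun _ hA => hA.1

theorem mulVec_mem_of_mem_flagSemigroup (hF : IsFlag (Vsub n) F) {A : Matrix (Fin n) (Fin n) ℝ}
    (hA : A ∈ flagSemigroup F) {x : Fin n → ℝ} (i : Fin (k + 1)) (hx : x ∈ F i) :
    A *ᵥ x ∈ F i := by
  induction i using Fin.cases with
  | zero => rw [hF.zero, Submodule.mem_bot] at hx ⊢; rw [hx, mulVec_zero]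
  | succ i => exact hF.strictMono.monotone (Fin.castSucc_le_succ i) (hA.2 i x hx)

theorem isSubsg_flagSemigroup (hF : IsFlag (Vsub n) F) : IsSubsg (flagSemigroup F) :=
  fun _ hA _ hB => ⟨mul_mem_Dset hA.1 hB.1, fun i x hx => by
    rw [← mulVec_mulVec]; exact mulVec_mem_of_mem_flagSemigroup hF hA _ (hB.2 i x hx)⟩

theorem exists_mem_flagSemigroup_mulVec_eq_smul (hF : IsFlag (Vsub n) F) {p : Fin (k + 1)}
    {y : Fin n → ℝ} (hy : y ∈ F p) {f : (Fin n → ℝ) →ₗ[ℝ] ℝ} (hf : F p ≤ LinearMap.ker f) :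
    ∃ A ∈ flagSemigroup F, ∃ ε : ℝ, ε ≠ 0 ∧ ∀ x ∈ Vsub n, A *ᵥ x = (ε * f x) • y := by
  obtain ⟨A, hA, ε, hε, hAx⟩ := exists_mem_Dset_mulVec_eq_smul (hF.le p hy) f
  refine ⟨A, ⟨hA, fun i x hx => ?_⟩, ε, hε, hAx⟩
  rw [hAx x (hF.le _ hx)]
  rcases le_or_gt i.succ p with hip | hpi
  · rw [hf (hF.strictMono.monotone hip hx), mul_zero, zero_smul]
    exact zero_mem _
  · exact Submodule.smul_mem _ _ (hF.strictMono.monotone (Fin.le_castSucc_iff.2 hpi) hy)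

theorem le_kerChain_flagSemigroup (hF : IsFlag (Vsub n) F) (i : Fin (k + 1)) :
    F i ≤ kerChain (flagSemigroup F) i := by
  induction i using Fin.induction with
  | zero => simp [hF.zero]
  | succ i ih =>
    exact fun v hv => (mem_kerChain_succ flagSemigroup_subset_Dset).2
      ⟨hF.le _ hv, fun A hA => ih (hA.2 i v hv)⟩

theorem kerChain_flagSemigroup_le (hF : IsFlag (Vsub n) F) (i : Fin (k + 1)) :
    kerChain (flagSemigroup F) i ≤ F i := by
  induction i using Fin.induction with
  | zero => simp [kerChain_zero]
  | succ i ih =>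
    intro u hu
    by_contra hui
    -- some `A ∈ flagSemigroup F` maps `u` onto a vector of `F (i + 1)` outside `F i`
    obtain ⟨z, hz, hzi⟩ := hF.exists_mem_notMem i
    obtain ⟨f, hfu, hf⟩ := Submodule.exists_le_ker_of_notMem hui
    obtain ⟨A, hA, ε, hε, hAx⟩ := exists_mem_flagSemigroup_mulVec_eq_smul hF hz hf
    have hAu := ((mem_kerChain_succ flagSemigroup_subset_Dset).1 hu).2 A hA
    rw [hAx u (kerChain_le_Vsub hu), Submodule.smul_mem_iff _ (mul_ne_zero hε hfu)] at hAu
    exact hzi (ih hAu)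

theorem kerChain_flagSemigroup (hF : IsFlag (Vsub n) F) (i : Fin (k + 1)) :
    kerChain (flagSemigroup F) i = F i :=
  (kerChain_flagSemigroup_le hF i).antisymm (le_kerChain_flagSemigroup hF i)

theorem le_kerChain_of_flagSemigroup_subset (hF : IsFlag (Vsub n) F) (hFT : flagSemigroup F ⊆ T)
    (hT : T ⊆ Dset n) (hTk : kerChain T k = Vsub n) (i : Fin (k + 1)) : F i ≤ kerChain T i := by
  induction i using Fin.reverseInduction with
  | last => rw [hF.last, Fin.val_last, hTk]
  | cast i ih =>
    intro v hv
    -- some `A ∈ flagSemigroup F` maps a vector of `F (i + 1)` outside `F i` onto `v`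
    obtain ⟨w, hw, hwi⟩ := hF.exists_mem_notMem i
    obtain ⟨f, hfw, hf⟩ := Submodule.exists_le_ker_of_notMem hwi
    obtain ⟨A, hA, ε, hε, hAx⟩ := exists_mem_flagSemigroup_mulVec_eq_smul hF hv hf
    have hAw := ((mem_kerChain_succ hT).1 (ih hw)).2 A (hFT hA)
    rwa [hAx w (hF.le _ hw), Submodule.smul_mem_iff _ (mul_ne_zero hε hfw)] at hAw

theorem nilLe_flagSemigroup (hF : IsFlag (Vsub n) F) (hk : 0 < k) :
    NilLe (On n) (Dset n) k (flagSemigroup F) := by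
  have hprod : ProdEq (On n) (flagSemigroup F) k := by
    have := kerChain_flagSemigroup hF (Fin.last k)
    rwa [Fin.val_last, hF.last, kerChain_eq_Vsub_iff_prodEq flagSemigroup_subset_Dset hk] at this
  exact ⟨flagSemigroup_subset_Dset, ⟨isSubsg_flagSemigroup hF, k, hk, hprod⟩,
    nilClass_le_of_prodEq hk hprod⟩

theorem maximal_flagSemigroup (hF : IsFlag (Vsub n) F) (hk : 0 < k) :
    Maximal (NilLe (On n) (Dset n) k) (flagSemigroup F) := by
  refine ⟨nilLe_flagSemigroup hF hk, fun T hT hFT A hA => ⟨hT.1 hA, fun i x hx => ?_⟩⟩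
  have hkerT : ∀ j : Fin (k + 1), kerChain T j = F j := fun j =>
    ((kerChain_anti hFT).trans (kerChain_flagSemigroup_le hF j)).antisymm
      (le_kerChain_of_flagSemigroup_subset hF hFT hT.1 (kerChain_eq_Vsub_of_nilLe hT) j)
  rw [← hkerT] at hx ⊢
  exact ((mem_kerChain_succ hT.1).1 hx).2 A hA

theorem exists_isFlag_of_nilLe (hkn : k ≤ n - 1) (hT : NilLe (On n) (Dset n) k T) :
    ∃ F : Fin (k + 1) → Submodule ℝ (Fin n → ℝ), IsFlag (Vsub n) F ∧ T ⊆ flagSemigroup F := by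
  obtain ⟨p, hhead, hlast, hpk, -⟩ :=
    exists_lowering_series_kerChain hT.1 (kerChain_eq_Vsub_of_nilLe hT)
  obtain ⟨⟨k, F, hstep⟩, hhead', hlast', rfl⟩ := exists_lowering_series_length_eq p hpk
    (by rw [hhead, hlast, finrank_bot, finrank_Vsub]; omega)
  refine ⟨F, ⟨hhead'.trans hhead, hlast'.trans hlast,
    Fin.strictMono_iff_lt_succ.2 fun i => (hstep i).1⟩, fun A hA => ⟨hT.1 hA, fun i x hx => ?_⟩⟩
  exact (hstep i).2 _ (mem_image_of_mem _ hA) hx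

theorem bijOn_flagSemigroup (hk : 0 < k) (hkn : k ≤ n - 1) :
    BijOn flagSemigroup {F : Fin (k + 1) → Submodule ℝ (Fin n → ℝ) |
        F 0 = ⊥ ∧ F (Fin.last k) = Vsub n ∧ StrictMono F}
      {T | Maximal (NilLe (On n) (Dset n) k) T} := by
  refine ⟨fun F ⟨h0, hlast, hF⟩ => maximal_flagSemigroup ⟨h0, hlast, hF⟩ hk,
    fun F ⟨h0, hlast, hF⟩ F' ⟨h0', hlast', hF'⟩ h => funext fun i => ?_, fun T hT => ?_⟩
  · rw [← kerChain_flagSemigroup ⟨h0, hlast, hF⟩ i, h, kerChain_flagSemigroup ⟨h0', hlast', hF'⟩ i]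
  · obtain ⟨F, hF, hTF⟩ := exists_isFlag_of_nilLe hkn hT.1
    exact ⟨F, ⟨hF.zero, hF.last, hF.strictMono⟩,
      (hT.eq_of_le (nilLe_flagSemigroup hF hk) hTF).symm⟩

end Flag

/-- The map sending a flag `0 = V_0 ⊊ V_1 ⊊ ⋯ ⊊ V_k = V` of length
`k` in the hyperplane `V` of sum-zero vectors to
`{A ∈ D_n : A·V_i ⊆ V_{i-1} for all i}` is a bijection from the set of flags of
length `k` in `V` onto the set of maximal elements of `Nil_k(D_n)`. In particular,
the maximal nilpotent subsemigroups of `D_n` correspond bijectively to complete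
flags (of length `n - 1`) in `V`. -/
theorem stmt18 (n k : ℕ) (hn : 2 ≤ n) (hk1 : 1 ≤ k) (hkn : k ≤ n - 1) :
    Set.BijOn
        (fun V : Fin (k + 1) → Submodule ℝ (Fin n → ℝ) =>
          {A | A ∈ Dset n ∧ ∀ i : Fin k, ∀ x ∈ V i.succ, A.mulVec x ∈ V i.castSucc})
        {V | V 0 = ⊥ ∧ V (Fin.last k) = Vsub n ∧ StrictMono V}
        {T | Maximal (NilLe (On n) (Dset n) k) T} ∧
      Set.BijOn
        (fun V : Fin (n - 1 + 1) → Submodule ℝ (Fin n → ℝ) =>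
          {A | A ∈ Dset n ∧ ∀ i : Fin (n - 1), ∀ x ∈ V i.succ, A.mulVec x ∈ V i.castSucc})
        {V | V 0 = ⊥ ∧ V (Fin.last (n - 1)) = Vsub n ∧ StrictMono V}
        {T | Maximal (NilIn (On n) (Dset n)) T} := by
  have hNilIn : NilIn (On n) (Dset n) = NilLe (On n) (Dset n) (n - 1) :=
    funext fun _ => propext (nilIn_iff_nilLe hn)
  rw [hNilIn]
  exact ⟨bijOn_flagSemigroup hk1 hkn, bijOn_flagSemigroup (by omega) le_rfl⟩

end NilSg
end

section
/- Let n ≥ 2 and let T be a maximal nilpotent subsemigroup of D_n (a maximal element, with respect to inclusion, of the set of all nilpotent subsemigroups of D_n). Then T is a compact subset of the space of n×n real matrices. -/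
/-!
Multiplication is continuous, so the closure of a nilpotent subsemigroup `T` of `D_n` is again
a subsemigroup, every product of `k` elements of it equals `O_n` as soon as this holds in `T`,
and it stays inside the closed set `D_n`. Maximality forces `closure T = T`, and a closed subset
of the compact set `D_n` is compact.
-/

namespace NilSg

variable {M : Type*}

open Pointwise

section Closure

variable [Mul M] [TopologicalSpace M] [ContinuousMul M]

theorem IsSubsg.closure {T : Set M} (hT : IsSubsg T) : IsSubsg (closure T) :=
  fun _ ha _ hb => map_mem_closure₂ continuous_mul ha hb fun _ hx _ hy => hT hx hy

/-- The head set `A` is what makes the induction go through: peeling off the first factor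
`x` of the tail replaces the head `a ∈ closure A` by `a * x ∈ closure (A * T)`. -/
theorem foldl_mul_eq_of_mem_closure [T1Space M] {z : M} {A T : Set M} {m : ℕ}
    (h : ∀ a ∈ A, ∀ l : List M, (∀ x ∈ l, x ∈ T) → l.length = m → l.foldl (· * ·) a = z) :
    ∀ a ∈ closure A, ∀ l : List M, (∀ x ∈ l, x ∈ closure T) → l.length = m →
      l.foldl (· * ·) a = z := by
  induction m generalizing A with
  | zero =>
    rintro a ha l - hl
    obtain rfl := List.length_eq_zero_iff.1 hl
    have hAz : A ⊆ {z} := fun b hb => h b hb [] (by simp) rfl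
    simpa using closure_mono hAz ha
  | succ m ih =>
    rintro a ha (_ | ⟨x, l⟩) hl hlen
    · simp at hlen
    have hax : a * x ∈ closure (A * T) :=
      map_mem_closure₂ continuous_mul ha (hl x List.mem_cons_self)
        fun b hb y hy => Set.mul_mem_mul hb hy
    refine ih ?_ (a * x) hax l (fun y hy => hl y (List.mem_cons_of_mem _ hy))
      (by simpa using hlen)
    rintro _ ⟨b, hb, y, hy, rfl⟩ l' hl' hlen'
    exact h b hb (y :: l') (by simpa [hy] using hl') (by simp [hlen'])

theorem ProdEq.closure [T1Space M] {z : M} {T : Set M} {k : ℕ} (h : ProdEq z T k) :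
    ProdEq z (closure T) k := fun a l ha hl hlen =>
  foldl_mul_eq_of_mem_closure (fun b hb l' hl' hlen' => h b l' hb hl' (by omega)) a ha l hl rfl

theorem IsNilSubsg.closure [T1Space M] {z : M} {T : Set M} (h : IsNilSubsg z T) :
    IsNilSubsg z (closure T) :=
  let ⟨hsg, k, hk, hprod⟩ := h
  ⟨hsg.closure, k, hk, hprod.closure⟩

theorem isClosed_of_maximal_nilIn [T1Space M] {z : M} {S T : Set M} (hS : IsClosed S)
    (hT : Maximal (NilIn z S) T) : IsClosed T :=
  closure_subset_iff_isClosed.1 <|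
    hT.2 ⟨closure_minimal hT.1.1 hS, hT.1.2.closure⟩ subset_closure

end Closure

theorem isClosed_Dset (n : ℕ) : IsClosed (Dset n) := by
  simp only [Dset, Set.ofPred_and, Set.ofPred_forall]
  refine .inter (isClosed_iInter fun i => isClosed_iInter fun j => ?_)
    (.inter (isClosed_iInter fun i => ?_) (isClosed_iInter fun j => ?_))
  · exact isClosed_le continuous_const (continuous_id.matrix_elem i j)
  · exact isClosed_eq (continuous_finsetSum _ fun j _ => continuous_id.matrix_elem i j)
      continuous_const
  · exact isClosed_eq (continuous_finsetSum _ fun i _ => continuous_id.matrix_elem i j)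
      continuous_const

theorem Dset_subset_pi_Icc (n : ℕ) :
    Dset n ⊆ Set.univ.pi fun _ : Fin n => Set.univ.pi fun _ : Fin n => Set.Icc (0 : ℝ) 1 := by
  rintro A ⟨hnonneg, hrow, -⟩ i - j -
  exact ⟨hnonneg i j, hrow i ▸ Finset.single_le_sum (fun j' _ => hnonneg i j') (Finset.mem_univ j)⟩

theorem isCompact_Dset (n : ℕ) : IsCompact (Dset n) :=
  (isCompact_univ_pi fun _ => isCompact_univ_pi fun _ => isCompact_Icc).of_isClosed_subset
    (isClosed_Dset n) (Dset_subset_pi_Icc n)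

theorem stmt19_general (n : ℕ) (T : Set (Matrix (Fin n) (Fin n) ℝ))
    (hT : Maximal (NilIn (On n) (Dset n)) T) :
    IsCompact T :=
  (isCompact_Dset n).of_isClosed_subset (isClosed_of_maximal_nilIn (isClosed_Dset n) hT) hT.1.1

/-- Every maximal nilpotent subsemigroup of `D_n` is a compact subset
of the space of `n × n` real matrices. -/
theorem stmt19 (n : ℕ) (hn : 2 ≤ n) (T : Set (Matrix (Fin n) (Fin n) ℝ))
    (hT : Maximal (NilIn (On n) (Dset n)) T) :
    IsCompact T :=
  stmt19_general n T hT

end NilSg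
end
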